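/- The symmetry rule Symm is admissible in G3c₁^=⁻: for all terms s, r and finite multisets Γ, Δ of formulas, if the sequent s = r, Γ ⇒ Δ is derivable in G3c₁^=⁻, then the sequent r = s, Γ ⇒ Δ is derivable in G3c₁^=⁻. -/

import Mathlib

open FirstOrder Language Multiset

universe u v

variable {L : FirstOrder.Language.{u, v}}

/-- Number of occurrences of the variable `v` in a term. -/
def tCount (v : ℕ) : L.Term ℕ → ℕ
  | .var w => if w = v then 1 else 0
  | .func _ ts => Finset.univ.sum fun i => tCount v (ts i)

/-- First-order formulas over the language `L` (with built-in equality),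
with natural numbers as variables. -/
inductive Fm (L : FirstOrder.Language.{u, v}) : Type (max u v) where
  | falsum : Fm L
  | equal : L.Term ℕ → L.Term ℕ → Fm L
  | rel {l : ℕ} : L.Relations l → (Fin l → L.Term ℕ) → Fm L
  | and : Fm L → Fm L → Fm L
  | or : Fm L → Fm L → Fm L
  | imp : Fm L → Fm L → Fm L
  | all : ℕ → Fm L → Fm L
  | ex : ℕ → Fm L → Fm L

namespace Fm

/-- Atomic formulas: equalities and relational atoms. -/
inductive IsAtomic : Fm L → Prop where
  | equal (t₁ t₂ : L.Term ℕ) : (Fm.equal t₁ t₂).IsAtomic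
  | rel {l : ℕ} (R : L.Relations l) (ts : Fin l → L.Term ℕ) : (Fm.rel R ts).IsAtomic

/-- Number of free occurrences of the variable `v` in a formula. -/
def fCount (v : ℕ) : Fm L → ℕ
  | falsum => 0
  | equal t₁ t₂ => tCount v t₁ + tCount v t₂
  | rel _ ts => Finset.univ.sum fun i => tCount v (ts i)
  | and A B => fCount v A + fCount v B
  | or A B => fCount v A + fCount v B
  | imp A B => fCount v A + fCount v B
  | all y A => if y = v then 0 else fCount v A
  | ex y A => if y = v then 0 else fCount v A

/-- The set of free variables of a formula. -/
def freeVars : Fm L → Set ℕ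
  | falsum => ∅
  | equal t₁ t₂ => {w | tCount w t₁ ≠ 0 ∨ tCount w t₂ ≠ 0}
  | rel _ ts => {w | ∃ i, tCount w (ts i) ≠ 0}
  | and A B => A.freeVars ∪ B.freeVars
  | or A B => A.freeVars ∪ B.freeVars
  | imp A B => A.freeVars ∪ B.freeVars
  | all y A => A.freeVars \ {y}
  | ex y A => A.freeVars \ {y}

/-- Simultaneous substitution of terms for the free variables of a formula. -/
def ssub (σ : ℕ → L.Term ℕ) : Fm L → Fm L
  | falsum => falsum
  | equal t₁ t₂ => equal (t₁.subst σ) (t₂.subst σ)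
  | rel R ts => rel R fun i => (ts i).subst σ
  | and A B => and (A.ssub σ) (B.ssub σ)
  | or A B => or (A.ssub σ) (B.ssub σ)
  | imp A B => imp (A.ssub σ) (B.ssub σ)
  | all y A => all y (A.ssub (Function.update σ y (Term.var y)))
  | ex y A => ex y (A.ssub (Function.update σ y (Term.var y)))

/-- `A.subst v t` is `A[v/t]`, the substitution of the term `t`
for the variable `v` in `A`. -/
def subst (v : ℕ) (t : L.Term ℕ) (A : Fm L) : Fm L :=
  A.ssub (Function.update (Term.var : ℕ → L.Term ℕ) v t)

/-- `t` is free for `x` in `A` (no free occurrence of `x` lies in the scope of a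
quantifier binding a variable of `t`). -/
def freeFor (t : L.Term ℕ) (x : ℕ) : Fm L → Prop
  | falsum => True
  | equal _ _ => True
  | rel _ _ => True
  | and A B => freeFor t x A ∧ freeFor t x B
  | or A B => freeFor t x A ∧ freeFor t x B
  | imp A B => freeFor t x A ∧ freeFor t x B
  | all y A => x = y ∨ x ∉ A.freeVars ∨ (tCount y t = 0 ∧ freeFor t x A)
  | ex y A => x = y ∨ x ∉ A.freeVars ∨ (tCount y t = 0 ∧ freeFor t x A)

end Fm

/-- The rule Repl, given as the relation between the antecedent of the premiss and the
antecedent of the conclusion (the succedent is unchanged): from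
`s = r, P[v/s], P[v/r], Γ ⇒ Δ` infer `s = r, P[v/s], Γ ⇒ Δ`, for `P` atomic and
`v` not occurring in `s, r`. -/
def ReplFull (L : FirstOrder.Language.{u, v}) : Multiset (Fm L) → Multiset (Fm L) → Prop := fun Γp Γc =>
  ∃ (s r : L.Term ℕ) (v : ℕ) (P : Fm L) (Γ : Multiset (Fm L)),
    P.IsAtomic ∧ tCount v s = 0 ∧ tCount v r = 0 ∧
    Γp = Fm.equal s r ::ₘ P.subst v s ::ₘ P.subst v r ::ₘ Γ ∧
    Γc = Fm.equal s r ::ₘ P.subst v s ::ₘ Γ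

/-- The rule Repl⁻: from `s = r, P[v/r], Γ ⇒ Δ` infer `s = r, P[v/s], Γ ⇒ Δ`,
for `P` atomic and `v` not occurring in `s, r`. -/
def ReplMinus (L : FirstOrder.Language.{u, v}) : Multiset (Fm L) → Multiset (Fm L) → Prop := fun Γp Γc =>
  ∃ (s r : L.Term ℕ) (v : ℕ) (P : Fm L) (Γ : Multiset (Fm L)),
    P.IsAtomic ∧ tCount v s = 0 ∧ tCount v r = 0 ∧
    Γp = Fm.equal s r ::ₘ P.subst v r ::ₘ Γ ∧
    Γc = Fm.equal s r ::ₘ P.subst v s ::ₘ Γ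

/-- The rule Repl₁⁻: Repl⁻ restricted to atomic `P` with exactly one occurrence of `v`. -/
def ReplMinus1 (L : FirstOrder.Language.{u, v}) : Multiset (Fm L) → Multiset (Fm L) → Prop := fun Γp Γc =>
  ∃ (s r : L.Term ℕ) (v : ℕ) (P : Fm L) (Γ : Multiset (Fm L)),
    P.IsAtomic ∧ tCount v s = 0 ∧ tCount v r = 0 ∧ Fm.fCount v P = 1 ∧
    Γp = Fm.equal s r ::ₘ P.subst v r ::ₘ Γ ∧
    Γc = Fm.equal s r ::ₘ P.subst v s ::ₘ Γ

/-- `DerC rp n Γ Δ`: the sequent `Γ ⇒ Δ` has a derivation of height at most `n` in the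
classical multisuccedent G3 calculus `G3c` with the equality rule Ref and the
replacement rule given by `rp` (e.g. `ReplFull L` for `G3c^=`, `ReplMinus L` for `G3c^=⁻`,
`ReplMinus1 L` for `G3c₁^=⁻`). -/
inductive DerC (rp : Multiset (Fm L) → Multiset (Fm L) → Prop) :
    ℕ → Multiset (Fm L) → Multiset (Fm L) → Prop where
  | ax {n : ℕ} {Γ Δ : Multiset (Fm L)} {P : Fm L} (hP : P.IsAtomic) :
      DerC rp n (P ::ₘ Γ) (P ::ₘ Δ)
  | botL {n : ℕ} {Γ Δ : Multiset (Fm L)} : DerC rp n (Fm.falsum ::ₘ Γ) Δ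
  | andL {n : ℕ} {Γ Δ : Multiset (Fm L)} {A B : Fm L} :
      DerC rp n (A ::ₘ B ::ₘ Γ) Δ → DerC rp (n + 1) (Fm.and A B ::ₘ Γ) Δ
  | andR {n : ℕ} {Γ Δ : Multiset (Fm L)} {A B : Fm L} :
      DerC rp n Γ (A ::ₘ Δ) → DerC rp n Γ (B ::ₘ Δ) → DerC rp (n + 1) Γ (Fm.and A B ::ₘ Δ)
  | orL {n : ℕ} {Γ Δ : Multiset (Fm L)} {A B : Fm L} :
      DerC rp n (A ::ₘ Γ) Δ → DerC rp n (B ::ₘ Γ) Δ → DerC rp (n + 1) (Fm.or A B ::ₘ Γ) Δ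
  | orR {n : ℕ} {Γ Δ : Multiset (Fm L)} {A B : Fm L} :
      DerC rp n Γ (A ::ₘ B ::ₘ Δ) → DerC rp (n + 1) Γ (Fm.or A B ::ₘ Δ)
  | impL {n : ℕ} {Γ Δ : Multiset (Fm L)} {A B : Fm L} :
      DerC rp n Γ (A ::ₘ Δ) → DerC rp n (B ::ₘ Γ) Δ → DerC rp (n + 1) (Fm.imp A B ::ₘ Γ) Δ
  | impR {n : ℕ} {Γ Δ : Multiset (Fm L)} {A B : Fm L} :
      DerC rp n (A ::ₘ Γ) (B ::ₘ Δ) → DerC rp (n + 1) Γ (Fm.imp A B ::ₘ Δ)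
  | allL {n : ℕ} {Γ Δ : Multiset (Fm L)} {x : ℕ} {t : L.Term ℕ} {A : Fm L}
      (hf : Fm.freeFor t x A) :
      DerC rp n (A.subst x t ::ₘ Fm.all x A ::ₘ Γ) Δ → DerC rp (n + 1) (Fm.all x A ::ₘ Γ) Δ
  | allR {n : ℕ} {Γ Δ : Multiset (Fm L)} {x y : ℕ} {A : Fm L}
      (hf : Fm.freeFor (Term.var y) x A) (hy : y ∉ (Fm.all x A).freeVars)
      (hΓ : ∀ C ∈ Γ, y ∉ Fm.freeVars C) (hΔ : ∀ C ∈ Δ, y ∉ Fm.freeVars C) :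
      DerC rp n Γ (A.subst x (Term.var y) ::ₘ Δ) → DerC rp (n + 1) Γ (Fm.all x A ::ₘ Δ)
  | exL {n : ℕ} {Γ Δ : Multiset (Fm L)} {x y : ℕ} {A : Fm L}
      (hf : Fm.freeFor (Term.var y) x A) (hy : y ∉ (Fm.ex x A).freeVars)
      (hΓ : ∀ C ∈ Γ, y ∉ Fm.freeVars C) (hΔ : ∀ C ∈ Δ, y ∉ Fm.freeVars C) :
      DerC rp n (A.subst x (Term.var y) ::ₘ Γ) Δ → DerC rp (n + 1) (Fm.ex x A ::ₘ Γ) Δ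
  | exR {n : ℕ} {Γ Δ : Multiset (Fm L)} {x : ℕ} {t : L.Term ℕ} {A : Fm L}
      (hf : Fm.freeFor t x A) :
      DerC rp n Γ (A.subst x t ::ₘ Fm.ex x A ::ₘ Δ) → DerC rp (n + 1) Γ (Fm.ex x A ::ₘ Δ)
  | ref {n : ℕ} {Γ Δ : Multiset (Fm L)} (t : L.Term ℕ) :
      DerC rp n (Fm.equal t t ::ₘ Γ) Δ → DerC rp (n + 1) Γ Δ
  | repl {n : ℕ} {Γp Γc Δ : Multiset (Fm L)} (h : rp Γp Γc) :
      DerC rp n Γp Δ → DerC rp (n + 1) Γc Δ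

/-- `DerI rp n Γ Δ`: the sequent `Γ ⇒ Δ` has a derivation of height at most `n` in the
intuitionistic multisuccedent G3 calculus (the right rules for `→` and `∀` have
single-succedent premisses, and L→ repeats its principal formula) with the equality rule
Ref and the replacement rule given by `rp`. -/
inductive DerI (rp : Multiset (Fm L) → Multiset (Fm L) → Prop) :
    ℕ → Multiset (Fm L) → Multiset (Fm L) → Prop where
  | ax {n : ℕ} {Γ Δ : Multiset (Fm L)} {P : Fm L} (hP : P.IsAtomic) :
      DerI rp n (P ::ₘ Γ) (P ::ₘ Δ)
  | botL {n : ℕ} {Γ Δ : Multiset (Fm L)} : DerI rp n (Fm.falsum ::ₘ Γ) Δ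
  | andL {n : ℕ} {Γ Δ : Multiset (Fm L)} {A B : Fm L} :
      DerI rp n (A ::ₘ B ::ₘ Γ) Δ → DerI rp (n + 1) (Fm.and A B ::ₘ Γ) Δ
  | andR {n : ℕ} {Γ Δ : Multiset (Fm L)} {A B : Fm L} :
      DerI rp n Γ (A ::ₘ Δ) → DerI rp n Γ (B ::ₘ Δ) → DerI rp (n + 1) Γ (Fm.and A B ::ₘ Δ)
  | orL {n : ℕ} {Γ Δ : Multiset (Fm L)} {A B : Fm L} :
      DerI rp n (A ::ₘ Γ) Δ → DerI rp n (B ::ₘ Γ) Δ → DerI rp (n + 1) (Fm.or A B ::ₘ Γ) Δ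
  | orR {n : ℕ} {Γ Δ : Multiset (Fm L)} {A B : Fm L} :
      DerI rp n Γ (A ::ₘ B ::ₘ Δ) → DerI rp (n + 1) Γ (Fm.or A B ::ₘ Δ)
  | impL {n : ℕ} {Γ Δ : Multiset (Fm L)} {A B : Fm L} :
      DerI rp n (Fm.imp A B ::ₘ Γ) (A ::ₘ Δ) → DerI rp n (B ::ₘ Γ) Δ →
      DerI rp (n + 1) (Fm.imp A B ::ₘ Γ) Δ
  | impR {n : ℕ} {Γ Δ : Multiset (Fm L)} {A B : Fm L} :
      DerI rp n (A ::ₘ Γ) {B} → DerI rp (n + 1) Γ (Fm.imp A B ::ₘ Δ)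
  | allL {n : ℕ} {Γ Δ : Multiset (Fm L)} {x : ℕ} {t : L.Term ℕ} {A : Fm L}
      (hf : Fm.freeFor t x A) :
      DerI rp n (A.subst x t ::ₘ Fm.all x A ::ₘ Γ) Δ → DerI rp (n + 1) (Fm.all x A ::ₘ Γ) Δ
  | allR {n : ℕ} {Γ Δ : Multiset (Fm L)} {x y : ℕ} {A : Fm L}
      (hf : Fm.freeFor (Term.var y) x A) (hy : y ∉ (Fm.all x A).freeVars)
      (hΓ : ∀ C ∈ Γ, y ∉ Fm.freeVars C) :
      DerI rp n Γ {A.subst x (Term.var y)} → DerI rp (n + 1) Γ (Fm.all x A ::ₘ Δ)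
  | exL {n : ℕ} {Γ Δ : Multiset (Fm L)} {x y : ℕ} {A : Fm L}
      (hf : Fm.freeFor (Term.var y) x A) (hy : y ∉ (Fm.ex x A).freeVars)
      (hΓ : ∀ C ∈ Γ, y ∉ Fm.freeVars C) (hΔ : ∀ C ∈ Δ, y ∉ Fm.freeVars C) :
      DerI rp n (A.subst x (Term.var y) ::ₘ Γ) Δ → DerI rp (n + 1) (Fm.ex x A ::ₘ Γ) Δ
  | exR {n : ℕ} {Γ Δ : Multiset (Fm L)} {x : ℕ} {t : L.Term ℕ} {A : Fm L}
      (hf : Fm.freeFor t x A) :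
      DerI rp n Γ (A.subst x t ::ₘ Fm.ex x A ::ₘ Δ) → DerI rp (n + 1) Γ (Fm.ex x A ::ₘ Δ)
  | ref {n : ℕ} {Γ Δ : Multiset (Fm L)} (t : L.Term ℕ) :
      DerI rp n (Fm.equal t t ::ₘ Γ) Δ → DerI rp (n + 1) Γ Δ
  | repl {n : ℕ} {Γp Γc Δ : Multiset (Fm L)} (h : rp Γp Γc) :
      DerI rp n Γp Δ → DerI rp (n + 1) Γc Δ


/-! The symmetric equation `r = s` can be added to the antecedent of a derivation of
`s = r, Γ ⇒ Δ` without renaming eigenvariables: its variables already occur in an atomic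
antecedent formula, and such variables stay in atomic antecedent formulas all the way up the
derivation (Repl₁⁻ trades `P[v/s]` for `P[v/r]`, but the variables of `s` remain in `s = r`),
so they can never be eigenvariables. From `r = s, s = r, Γ ⇒ Δ`, the instance of Repl₁⁻ with
`P := (w = r)` for a fresh `w` rewrites `s = r` to `r = r`, which Ref then removes. -/

lemma tCount_subst_update_ne_zero {w v : ℕ} {s r : L.Term ℕ} :
    ∀ {t : L.Term ℕ}, tCount w (t.subst (Function.update Term.var v s)) ≠ 0 →
      tCount w s ≠ 0 ∨ tCount w (t.subst (Function.update Term.var v r)) ≠ 0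
  | .var z, h => by
      by_cases hz : z = v <;> simp_all
  | .func f ts, h => by
      simp only [Term.subst, tCount] at h ⊢
      obtain ⟨i, -, hi⟩ := Finset.exists_ne_zero_of_sum_ne_zero h
      exact (tCount_subst_update_ne_zero (r := r) hi).imp_right fun hi' hsum =>
        hi' (Finset.sum_eq_zero_iff.mp hsum i (Finset.mem_univ i))

lemma subst_update_eq_self {w : ℕ} {u : L.Term ℕ} :
    ∀ {t : L.Term ℕ}, tCount w t = 0 → t.subst (Function.update Term.var w u) = t
  | .var z, h => by
      have hz : z ≠ w := by rintro rfl; simp [tCount] at h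
      simp [Function.update_of_ne hz]
  | .func f ts, h => by
      simp only [tCount, Finset.sum_eq_zero_iff, Finset.mem_univ, true_imp_iff] at h
      simp only [Term.subst, subst_update_eq_self (h _)]

lemma eventually_tCount_eq_zero : ∀ t : L.Term ℕ, ∀ᶠ w in Filter.atTop, tCount w t = 0
  | .var z => (Filter.eventually_gt_atTop z).mono fun w hw => by simp [tCount, hw.ne]
  | .func f ts => (Filter.eventually_all.mpr fun i => eventually_tCount_eq_zero (ts i)).mono
      fun w hw => Finset.sum_eq_zero fun i _ => hw i

namespace Fm

lemma IsAtomic.subst {P : Fm L} (hP : P.IsAtomic) (v : ℕ) (t : L.Term ℕ) :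
    (P.subst v t).IsAtomic := by
  cases hP <;> constructor

lemma IsAtomic.freeVars_subst_subset {P : Fm L} (hP : P.IsAtomic) (v : ℕ) (s r : L.Term ℕ) :
    (P.subst v s).freeVars ⊆ {w | tCount w s ≠ 0} ∪ (P.subst v r).freeVars := by
  intro w hw
  cases hP with
  | equal t₁ t₂ =>
      rcases hw with h | h
      · exact (tCount_subst_update_ne_zero h).imp_right Or.inl
      · exact (tCount_subst_update_ne_zero h).imp_right Or.inr
  | rel R ts =>
      obtain ⟨i, hi⟩ := hw
      exact (tCount_subst_update_ne_zero hi).imp_right fun h => ⟨i, h⟩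

lemma freeVars_equal_comm (s r : L.Term ℕ) : (equal s r).freeVars = (equal r s).freeVars :=
  Set.ext fun _ => or_comm

lemma subst_equal_var {w : ℕ} {r : L.Term ℕ} (hr : tCount w r = 0) (t : L.Term ℕ) :
    (equal (Term.var w) r).subst w t = equal t r := by
  simp [subst, ssub, subst_update_eq_self hr]

lemma fCount_equal_var {w : ℕ} {r : L.Term ℕ} (hr : tCount w r = 0) :
    (equal (Term.var w) r).fCount w = 1 := by
  simp [fCount, tCount, hr]

end Fm

def atomicFreeVars (Γ : Multiset (Fm L)) : Set ℕ :=
  {w | ∃ C ∈ Γ, C.IsAtomic ∧ w ∈ C.freeVars}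

lemma freeVars_subset_atomicFreeVars {C : Fm L} {Γ : Multiset (Fm L)} (hC : C ∈ Γ)
    (hA : C.IsAtomic) : C.freeVars ⊆ atomicFreeVars Γ :=
  fun _ hw => ⟨C, hC, hA, hw⟩

lemma atomicFreeVars_mono {Γ Γ' : Multiset (Fm L)} (h : Γ ⊆ Γ') :
    atomicFreeVars Γ ⊆ atomicFreeVars Γ' :=
  fun _ ⟨C, hC, hA, hw⟩ => ⟨C, h hC, hA, hw⟩

lemma atomicFreeVars_cons_of_not_isAtomic {A : Fm L} (hA : ¬ A.IsAtomic)
    (Γ : Multiset (Fm L)) : atomicFreeVars (A ::ₘ Γ) = atomicFreeVars Γ := by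
  ext w
  simp only [atomicFreeVars, Set.mem_ofPred_eq, Multiset.mem_cons, exists_eq_or_imp]
  exact or_iff_right fun h => hA h.1

lemma notMem_freeVars_of_subset_atomicFreeVars {E : Fm L} {Γ : Multiset (Fm L)} {y : ℕ}
    (hE : E.freeVars ⊆ atomicFreeVars Γ) (hΓ : ∀ C ∈ Γ, y ∉ C.freeVars) :
    y ∉ E.freeVars := fun hy =>
  let ⟨C, hC, _, hyC⟩ := hE hy
  hΓ C hC hyC

namespace ReplMinus1

lemma cons {Γp Γc : Multiset (Fm L)} (h : ReplMinus1 L Γp Γc) (E : Fm L) :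
    ReplMinus1 L (E ::ₘ Γp) (E ::ₘ Γc) := by
  obtain ⟨s, r, v, P, Γ, hP, hs, hr, hv, rfl, rfl⟩ := h
  exact ⟨s, r, v, P, E ::ₘ Γ, hP, hs, hr, hv, by rw [cons_swap E, cons_swap E],
    by rw [cons_swap E, cons_swap E]⟩

lemma atomicFreeVars_subset {Γp Γc : Multiset (Fm L)} (h : ReplMinus1 L Γp Γc) :
    atomicFreeVars Γc ⊆ atomicFreeVars Γp := by
  obtain ⟨s, r, v, P, Γ, hP, -, -, -, rfl, rfl⟩ := h
  rintro w ⟨C, hC, hA, hw⟩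
  rcases mem_cons.mp hC with rfl | hC
  · exact ⟨_, mem_cons_self _ _, hA, hw⟩
  rcases mem_cons.mp hC with rfl | hC
  · rcases hP.freeVars_subst_subset v s r hw with hs | hr
    · exact ⟨Fm.equal s r, mem_cons_self _ _, .equal s r, Or.inl hs⟩
    · exact ⟨P.subst v r, mem_cons_of_mem (mem_cons_self _ _), hP.subst v r, hr⟩
  · exact ⟨C, mem_cons_of_mem (mem_cons_of_mem hC), hA, hw⟩

lemma rewrite_refl (s r : L.Term ℕ) (Γ : Multiset (Fm L)) :
    ReplMinus1 L (Fm.equal r s ::ₘ Fm.equal s r ::ₘ Γ)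
      (Fm.equal r s ::ₘ Fm.equal r r ::ₘ Γ) := by
  obtain ⟨w, hws, hwr⟩ :=
    ((eventually_tCount_eq_zero s).and (eventually_tCount_eq_zero r)).exists
  refine ⟨r, s, w, Fm.equal (Term.var w) r, Γ, .equal _ _, hwr, hws, Fm.fCount_equal_var hwr,
    ?_, ?_⟩ <;> rw [Fm.subst_equal_var hwr]

end ReplMinus1

theorem DerC.weaken_left {rp : Multiset (Fm L) → Multiset (Fm L) → Prop}
    (hcons : ∀ {Γp Γc}, rp Γp Γc → ∀ E, rp (E ::ₘ Γp) (E ::ₘ Γc))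
    (hatoms : ∀ {Γp Γc}, rp Γp Γc → atomicFreeVars Γc ⊆ atomicFreeVars Γp)
    {n : ℕ} {Γ Δ : Multiset (Fm L)} (h : DerC rp n Γ Δ) {E : Fm L}
    (hE : E.freeVars ⊆ atomicFreeVars Γ) : DerC rp n (E ::ₘ Γ) Δ := by
  induction h with
  | ax hP => rw [cons_swap]; exact .ax hP
  | botL => rw [cons_swap]; exact .botL
  | @andL n Γ Δ A B _ ih =>
      rw [atomicFreeVars_cons_of_not_isAtomic (by rintro ⟨⟩)] at hE
      rw [cons_swap]
      refine .andL ?_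
      rw [cons_swap B, cons_swap A]
      exact ih (hE.trans (atomicFreeVars_mono fun _ hC => mem_cons_of_mem (mem_cons_of_mem hC)))
  | andR _ _ ih₁ ih₂ => exact .andR (ih₁ hE) (ih₂ hE)
  | @orL n Γ Δ A B _ _ ih₁ ih₂ =>
      rw [atomicFreeVars_cons_of_not_isAtomic (by rintro ⟨⟩)] at hE
      rw [cons_swap]
      refine .orL ?_ ?_
      · rw [cons_swap A]; exact ih₁ (hE.trans (atomicFreeVars_mono (subset_cons _ _)))
      · rw [cons_swap B]; exact ih₂ (hE.trans (atomicFreeVars_mono (subset_cons _ _)))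
  | orR _ ih => exact .orR (ih hE)
  | @impL n Γ Δ A B _ _ ih₁ ih₂ =>
      rw [atomicFreeVars_cons_of_not_isAtomic (by rintro ⟨⟩)] at hE
      rw [cons_swap]
      refine .impL (ih₁ hE) ?_
      rw [cons_swap B]; exact ih₂ (hE.trans (atomicFreeVars_mono (subset_cons _ _)))
  | @impR n Γ Δ A B _ ih =>
      refine .impR ?_
      rw [cons_swap A]; exact ih (hE.trans (atomicFreeVars_mono (subset_cons _ _)))
  | @allL n Γ Δ x t A hf _ ih =>
      rw [cons_swap]
      refine .allL hf ?_
      rw [cons_swap (Fm.all x A), cons_swap (A.subst x t)]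
      exact ih (hE.trans (atomicFreeVars_mono (subset_cons _ _)))
  | allR hf hy hΓ hΔ _ ih =>
      exact .allR hf hy (forall_mem_cons.mpr
        ⟨notMem_freeVars_of_subset_atomicFreeVars hE hΓ, hΓ⟩) hΔ (ih hE)
  | @exL n Γ Δ x y A hf hy hΓ hΔ _ ih =>
      rw [atomicFreeVars_cons_of_not_isAtomic (by rintro ⟨⟩)] at hE
      rw [cons_swap]
      refine .exL hf hy (forall_mem_cons.mpr
        ⟨notMem_freeVars_of_subset_atomicFreeVars hE hΓ, hΓ⟩) hΔ ?_
      rw [cons_swap (A.subst x (Term.var y))]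
      exact ih (hE.trans (atomicFreeVars_mono (subset_cons _ _)))
  | exR hf _ ih => exact .exR hf (ih hE)
  | @ref n Γ Δ t _ ih =>
      refine .ref t ?_
      rw [cons_swap (Fm.equal t t)]
      exact ih (hE.trans (atomicFreeVars_mono (subset_cons _ _)))
  | repl hr _ ih => exact .repl (hcons hr E) (ih (hE.trans (hatoms hr)))

/-- The symmetry rule Symm is admissible in `G3c₁^=⁻`: if `s = r, Γ ⇒ Δ` is derivable,
then so is `r = s, Γ ⇒ Δ`. -/
theorem symm_admissible_G3c1EqMinus (L : FirstOrder.Language.{u, v})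
    (s r : L.Term ℕ) (Γ Δ : Multiset (Fm L))
    (hd : ∃ n, DerC (ReplMinus1 L) n (Fm.equal s r ::ₘ Γ) Δ) :
    ∃ n, DerC (ReplMinus1 L) n (Fm.equal r s ::ₘ Γ) Δ := by
  obtain ⟨n, hd⟩ := hd
  have hweak : DerC (ReplMinus1 L) n (Fm.equal r s ::ₘ Fm.equal s r ::ₘ Γ) Δ :=
    hd.weaken_left ReplMinus1.cons ReplMinus1.atomicFreeVars_subset <|
      Fm.freeVars_equal_comm r s ▸ freeVars_subset_atomicFreeVars (mem_cons_self _ _) (.equal s r)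
  have hrefl := DerC.repl (ReplMinus1.rewrite_refl s r Γ) hweak
  exact ⟨n + 2, .ref r (by rwa [cons_swap])⟩
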